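/- Let P₁ > 0 and P₂ > 0. Then the function u ↦ G₁(u,P₁,0,P₂,0) is nondecreasing on [0,∞); consequently inf_{u≥0} G₁(u,P₁,0,P₂,0) = G₁(0,P₁,0,P₂,0) = 0, i.e. the infimum is attained at u = 0. -/
import Mathlib


open MeasureTheory Real Set

/-- `G₁(u,P₁,0,P₂,0) := ∫ [P₁·(((1−uy)⁺)² − 1) + P₂·((1−uy)⁻)²] λ dν(y) + 2uP₁(b+λb_Y)`. -/
noncomputable def G1zero (ν : Measure ℝ) (lam b P₁ P₂ : ℝ) (u : ℝ) : ℝ :=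
  lam * ∫ y, (P₁ * ((max (1 - u * y) 0) ^ 2 - 1)
      + P₂ * (max (-(1 - u * y)) 0) ^ 2) ∂ν
    + 2 * u * P₁ * (b + lam * ∫ y, y ∂ν)

lemma integrableF (ν : Measure ℝ) [IsProbabilityMeasure ν]
    (hν0 : ∀ᵐ y ∂ν, 0 ≤ y) (hy2 : Integrable (fun y => y ^ 2) ν)
    (P₁ P₂ u : ℝ) (hu : 0 ≤ u) :
    Integrable (fun y => P₁ * ((max (1 - u * y) 0) ^ 2 - 1)
      + P₂ * (max (-(1 - u * y)) 0) ^ 2) ν := by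
  have hmeas : AEStronglyMeasurable
      (fun y => P₁ * ((max (1 - u * y) 0) ^ 2 - 1)
        + P₂ * (max (-(1 - u * y)) 0) ^ 2) ν := by
    apply Continuous.aestronglyMeasurable
    fun_prop
  have hbound : Integrable (fun y => |P₁| + |P₂| * u ^ 2 * y ^ 2) ν :=
    (integrable_const _).add (hy2.const_mul _)
  refine hbound.mono' hmeas ?_
  filter_upwards [hν0] with y hy0
  set m1 := max (1 - u * y) 0 with hm1
  set m2 := max (-(1 - u * y)) 0 with hm2
  have huy : 0 ≤ u * y := mul_nonneg hu hy0
  have h1a : 0 ≤ m1 := le_max_right _ _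
  have h1b : m1 ≤ 1 := max_le (by linarith) (by norm_num)
  have h2a : 0 ≤ m2 := le_max_right _ _
  have h2b : m2 ≤ u * y := max_le (by linarith) huy
  have habs : |P₁ * (m1 ^ 2 - 1) + P₂ * m2 ^ 2|
      ≤ |P₁| * |m1 ^ 2 - 1| + |P₂| * |m2 ^ 2| := by
    calc |P₁ * (m1 ^ 2 - 1) + P₂ * m2 ^ 2|
        ≤ |P₁ * (m1 ^ 2 - 1)| + |P₂ * m2 ^ 2| := abs_add_le _ _
      _ = |P₁| * |m1 ^ 2 - 1| + |P₂| * |m2 ^ 2| := by rw [abs_mul, abs_mul]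
  have e1 : |m1 ^ 2 - 1| ≤ 1 := by
    rw [abs_le]; constructor <;> nlinarith
  have e2 : |m2 ^ 2| ≤ (u * y) ^ 2 := by
    rw [abs_of_nonneg (by positivity)]
    nlinarith
  calc ‖P₁ * (m1 ^ 2 - 1) + P₂ * m2 ^ 2‖
      = |P₁ * (m1 ^ 2 - 1) + P₂ * m2 ^ 2| := rfl
    _ ≤ |P₁| * |m1 ^ 2 - 1| + |P₂| * |m2 ^ 2| := habs
    _ ≤ |P₁| * 1 + |P₂| * (u * y) ^ 2 := by
        gcongr <;> positivity
    _ = |P₁| + |P₂| * u ^ 2 * y ^ 2 := by ring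

/-- for `P₁ > 0`, `P₂ > 0`, the map `u ↦ G₁(u,P₁,0,P₂,0)` is nondecreasing
on `[0,∞)`; hence `inf_{u≥0} G₁(u,P₁,0,P₂,0) = G₁(0,P₁,0,P₂,0) = 0`, attained at `u = 0`. -/
theorem stmt12 (ν : Measure ℝ) [IsProbabilityMeasure ν]
    (hν0 : ∀ᵐ y ∂ν, 0 ≤ y)
    (lam b : ℝ) (hlam : 0 < lam) (hb : 0 < b)
    (hy : Integrable (fun y => y) ν)
    (hy2 : Integrable (fun y => y ^ 2) ν)
    (hbY : 0 < ∫ y, y ∂ν)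
    (P₁ P₂ : ℝ) (hP₁ : 0 < P₁) (hP₂ : 0 < P₂) :
    MonotoneOn (G1zero ν lam b P₁ P₂) (Set.Ici 0) ∧
    G1zero ν lam b P₁ P₂ 0 = 0 ∧
    IsLeast (G1zero ν lam b P₁ P₂ '' Set.Ici 0) 0 := by
  set B := ∫ y, y ∂ν with hB
  have hmono : MonotoneOn (G1zero ν lam b P₁ P₂) (Set.Ici 0) := by
    intro u hu v hv huv
    simp only [Set.mem_Ici] at hu hv
    have hFu := integrableF ν hν0 hy2 P₁ P₂ u hu
    have hFv := integrableF ν hν0 hy2 P₁ P₂ v hv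
    have hlin : Integrable (fun y => (2 * (v - u) * P₁) * y) ν := hy.const_mul _
    -- key integral inequality
    have hkey : (∫ y, (P₁ * ((max (1 - u * y) 0) ^ 2 - 1)
          + P₂ * (max (-(1 - u * y)) 0) ^ 2) ∂ν) - (2 * (v - u) * P₁) * B
        ≤ ∫ y, (P₁ * ((max (1 - v * y) 0) ^ 2 - 1)
          + P₂ * (max (-(1 - v * y)) 0) ^ 2) ∂ν := by
      have : (∫ y, (P₁ * ((max (1 - u * y) 0) ^ 2 - 1)
            + P₂ * (max (-(1 - u * y)) 0) ^ 2) ∂ν) - (2 * (v - u) * P₁) * B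
          = ∫ y, ((P₁ * ((max (1 - u * y) 0) ^ 2 - 1)
            + P₂ * (max (-(1 - u * y)) 0) ^ 2) - (2 * (v - u) * P₁) * y) ∂ν := by
        rw [integral_sub hFu hlin, integral_const_mul]
      rw [this]
      apply integral_mono_ae (hFu.sub hlin) hFv
      filter_upwards [hν0] with y hy0
      set a := max (1 - u * y) 0 with ha
      set c := max (1 - v * y) 0 with hc
      set m := max (-(1 - u * y)) 0 with hm
      set n := max (-(1 - v * y)) 0 with hn
      have huy : 0 ≤ u * y := mul_nonneg hu hy0
      have hvy : u * y ≤ v * y := mul_le_mul_of_nonneg_right huv hy0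
      have ha0 : 0 ≤ a := le_max_right _ _
      have ha1 : a ≤ 1 := max_le (by linarith) (by norm_num)
      have hc0 : 0 ≤ c := le_max_right _ _
      have hc1 : c ≤ 1 := max_le (by nlinarith) (by norm_num)
      have hca : c ≤ a := max_le_max (by linarith) le_rfl
      have hac : a - c ≤ (v - u) * y := by
        have : a ≤ c + (v - u) * y := by
          apply max_le
          · have : 1 - u * y = (1 - v * y) + (v - u) * y := by ring
            rw [this]
            exact add_le_add (le_max_left _ _) le_rfl
          · nlinarith [le_max_right (-(1 - v * y)) 0, hc0]
        linarith
      have hm0 : 0 ≤ m := le_max_right _ _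
      have hmn : m ≤ n := max_le_max (by linarith) le_rfl
      show P₁ * (a ^ 2 - 1) + P₂ * m ^ 2 - 2 * (v - u) * P₁ * y
          ≤ P₁ * (c ^ 2 - 1) + P₂ * n ^ 2
      have h1 : a ^ 2 - c ^ 2 ≤ 2 * (v - u) * y := by nlinarith
      nlinarith [mul_le_mul_of_nonneg_left h1 hP₁.le,
        mul_le_mul_of_nonneg_left (pow_le_pow_left₀ hm0 hmn 2) hP₂.le]
    have := mul_le_mul_of_nonneg_left hkey hlam.le
    have hvu : 0 ≤ v - u := by linarith
    simp only [G1zero, ← hB]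
    nlinarith [mul_nonneg (mul_nonneg hvu hP₁.le) hb.le]
  have h0 : G1zero ν lam b P₁ P₂ 0 = 0 := by
    simp [G1zero]
  refine ⟨hmono, h0, ⟨⟨0, Set.self_mem_Ici, h0⟩, ?_⟩⟩
  rintro x ⟨u, hu, rfl⟩
  rw [← h0]
  exact hmono Set.self_mem_Ici hu hu
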